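/- arXiv:1903.08997 — 5 statements merged into one kernel-verified Lean document; each statement's English description precedes it below -/
import Mathlib

section
/- The 4-dimensional complex algebra B⁴₁₀ with basis e₁,e₂,e₃,e₄ and nonzero products e₁e₂ = e₃, e₁e₃ = e₄, e₂e₁ = e₄, e₃e₂ = e₄ is a bicommutative algebra, i.e., it satisfies (xy)z = (xz)y and x(yz) = y(xz) for all elements. -/
noncomputable def mB410 : (Fin 4 → ℂ) →ₗ[ℂ] (Fin 4 → ℂ) →ₗ[ℂ] (Fin 4 → ℂ) :=
  LinearMap.mk₂ ℂ (fun u v => ![0, 0, u 0 * v 1, u 0 * v 2 + u 1 * v 0 + u 2 * v 1])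
    (fun x y v => by funext i; fin_cases i <;> simp <;> ring)
    (fun a x v => by funext i; fin_cases i <;> simp <;> ring)
    (fun u x y => by funext i; fin_cases i <;> simp <;> ring)
    (fun u a x => by funext i; fin_cases i <;> simp <;> ring)

/-! Every product lies in `span {e₃, e₄}`, and multiplying such an element by anything
lands in `span {e₄}`; so both triple products have a single monomial coordinate, namely
`(xy)z = x₁y₂z₂ e₄` and `x(yz) = x₁y₁z₂ e₄`, which are visibly symmetric in `y, z`,
resp. in `x, y` (coordinates numbered from 1 as the basis, so `x₁ = x 0`). -/

lemma mB410_apply (u v : Fin 4 → ℂ) :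
    mB410 u v = ![0, 0, u 0 * v 1, u 0 * v 2 + u 1 * v 0 + u 2 * v 1] :=
  rfl

lemma mB410_mB410_left (x y z : Fin 4 → ℂ) :
    mB410 (mB410 x y) z = ![0, 0, 0, x 0 * y 1 * z 1] := by
  simp [mB410_apply]

lemma mB410_mB410_right (x y z : Fin 4 → ℂ) :
    mB410 x (mB410 y z) = ![0, 0, 0, x 0 * (y 0 * z 1)] := by
  simp [mB410_apply]

/-- The 4-dimensional algebra `B⁴₁₀` (nonzero products `e₁e₂=e₃`, `e₁e₃=e₄`,
`e₂e₁=e₄`, `e₃e₂=e₄`) is bicommutative. -/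
theorem B410_bicommutative :
    (∀ x y z : Fin 4 → ℂ, mB410 (mB410 x y) z = mB410 (mB410 x z) y) ∧
      (∀ x y z : Fin 4 → ℂ, mB410 x (mB410 y z) = mB410 y (mB410 x z)) := by
  refine ⟨fun x y z => ?_, fun x y z => ?_⟩
  · rw [mB410_mB410_left, mB410_mB410_left, mul_right_comm]
  · rw [mB410_mB410_right, mB410_mB410_right, mul_left_comm]
end

section
/- Every invertible algebra automorphism of the 3-dimensional complex algebra B³₀₁ (with nonzero products e₁e₁ = e₂, e₂e₁ = e₃) has matrix of the form [[x,0,0],[y,x²,0],[z,xy,x³]] with respect to the basis e₁,e₂,e₃, for some x ∈ ℂ*, y,z ∈ ℂ; conversely, every such matrix defines an automorphism. -/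
noncomputable def mB301 : (Fin 3 → ℂ) →ₗ[ℂ] (Fin 3 → ℂ) →ₗ[ℂ] (Fin 3 → ℂ) :=
  LinearMap.mk₂ ℂ (fun u v => ![0, u 0 * v 0, u 1 * v 0])
    (fun x y v => by funext i; fin_cases i <;> simp <;> ring)
    (fun a x v => by funext i; fin_cases i <;> simp <;> ring)
    (fun u x y => by funext i; fin_cases i <;> simp <;> ring)
    (fun u a x => by funext i; fin_cases i <;> simp <;> ring)

/-!
An automorphism is determined by the image `x e₁ + y e₂ + z e₃` of the generator `e₁`, since
`e₂ = e₁e₁` and `e₃ = e₂e₁` force `φ(e₂) = φ(e₁)²` and `φ(e₃) = φ(e₂)φ(e₁)`; so `φ` is the lower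
triangular map with diagonal `x, x², x³`. Conversely, such a map is multiplicative by a direct
computation, and it is bijective exactly when `x ≠ 0`.
-/

namespace B301

lemma mB301_apply (u v : Fin 3 → ℂ) : mB301 u v = ![0, u 0 * v 0, u 1 * v 0] := rfl

lemma mB301_single_zero_single_zero :
    mB301 (Pi.single 0 1) (Pi.single 0 1) = Pi.single 1 1 := by
  funext i; fin_cases i <;> simp [mB301_apply]

lemma mB301_single_one_single_zero :
    mB301 (Pi.single 1 1) (Pi.single 0 1) = Pi.single 2 1 := by
  funext i; fin_cases i <;> simp [mB301_apply]

def triangularMap (x y z : ℂ) : (Fin 3 → ℂ) →ₗ[ℂ] (Fin 3 → ℂ) where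
  toFun u := ![x * u 0, y * u 0 + x ^ 2 * u 1, z * u 0 + x * y * u 1 + x ^ 3 * u 2]
  map_add' u v := by funext i; fin_cases i <;> simp <;> ring
  map_smul' a u := by funext i; fin_cases i <;> simp <;> ring

lemma triangularMap_apply (x y z : ℂ) (u : Fin 3 → ℂ) :
    triangularMap x y z u =
      ![x * u 0, y * u 0 + x ^ 2 * u 1, z * u 0 + x * y * u 1 + x ^ 3 * u 2] := rfl

lemma triangularMap_map_mB301 (x y z : ℂ) (u v : Fin 3 → ℂ) :
    triangularMap x y z (mB301 u v) =
      mB301 (triangularMap x y z u) (triangularMap x y z v) := by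
  simp only [triangularMap_apply, mB301_apply]
  funext i; fin_cases i <;> simp <;> ring

lemma injective_triangularMap_iff {x y z : ℂ} :
    Function.Injective (triangularMap x y z) ↔ x ≠ 0 := by
  refine ⟨fun hinj hx => ?_, fun hx => ?_⟩
  · have hsingle : triangularMap x y z (Pi.single 2 1) = triangularMap x y z 0 := by
      funext i; fin_cases i <;> simp [triangularMap_apply, hx]
    simpa using congr_fun (hinj hsingle) 2
  · rw [← LinearMap.ker_eq_bot, LinearMap.ker_eq_bot']
    intro u hu
    have h0 : x * u 0 = 0 := congr_fun hu 0
    have h1 : y * u 0 + x ^ 2 * u 1 = 0 := congr_fun hu 1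
    have h2 : z * u 0 + x * y * u 1 + x ^ 3 * u 2 = 0 := congr_fun hu 2
    have hu0 : u 0 = 0 := by simpa [hx] using h0
    have hu1 : u 1 = 0 := by simpa [hu0, hx] using h1
    have hu2 : u 2 = 0 := by simpa [hu0, hu1, hx] using h2
    funext i; fin_cases i <;> assumption

lemma eq_triangularMap_iff (f : (Fin 3 → ℂ) →ₗ[ℂ] (Fin 3 → ℂ)) (x y z : ℂ) :
    f = triangularMap x y z ↔
      f (Pi.single 0 1) = x • Pi.single 0 1 + y • Pi.single 1 1 + z • Pi.single 2 1 ∧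
      f (Pi.single 1 1) = x ^ 2 • Pi.single 1 1 + (x * y) • Pi.single 2 1 ∧
      f (Pi.single 2 1) = x ^ 3 • Pi.single 2 1 := by
  have hcols :
      triangularMap x y z (Pi.single 0 1) =
          x • Pi.single 0 1 + y • Pi.single 1 1 + z • Pi.single 2 1 ∧
        triangularMap x y z (Pi.single 1 1) = x ^ 2 • Pi.single 1 1 + (x * y) • Pi.single 2 1 ∧
        triangularMap x y z (Pi.single 2 1) = x ^ 3 • Pi.single 2 1 := by
    refine ⟨?_, ?_, ?_⟩ <;> funext i <;> fin_cases i <;> simp [triangularMap_apply]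
  refine ⟨fun hf => hf ▸ hcols, fun ⟨h0, h1, h2⟩ => (Pi.basisFun ℂ (Fin 3)).ext fun i => ?_⟩
  fin_cases i <;> simp only [Pi.basisFun_apply]
  exacts [h0.trans hcols.1.symm, h1.trans hcols.2.1.symm, h2.trans hcols.2.2.symm]

lemma eq_triangularMap_of_map_mB301 (f : (Fin 3 → ℂ) →ₗ[ℂ] (Fin 3 → ℂ))
    (hf : ∀ u v, f (mB301 u v) = mB301 (f u) (f v)) :
    f = triangularMap (f (Pi.single 0 1) 0) (f (Pi.single 0 1) 1) (f (Pi.single 0 1) 2) := by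
  have h1 : f (Pi.single 1 1) = mB301 (f (Pi.single 0 1)) (f (Pi.single 0 1)) := by
    rw [← hf, mB301_single_zero_single_zero]
  have h2 : f (Pi.single 2 1) = mB301 (f (Pi.single 1 1)) (f (Pi.single 0 1)) := by
    rw [← hf, mB301_single_one_single_zero]
  refine (Pi.basisFun ℂ (Fin 3)).ext fun i => ?_
  fin_cases i <;> funext j <;> fin_cases j <;>
    simp [triangularMap_apply, h2, h1, mB301_apply] <;> ring

end B301

open B301 in
/-- The automorphisms of `B³₀₁` are exactly the linear maps with matrix
`[[x,0,0],[y,x²,0],[z,xy,x³]]`, `x ≠ 0`. -/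
theorem B301_automorphisms :
    (∀ φ : (Fin 3 → ℂ) ≃ₗ[ℂ] (Fin 3 → ℂ),
      (∀ u v : Fin 3 → ℂ, φ (mB301 u v) = mB301 (φ u) (φ v)) ↔
      (∃ x y z : ℂ, x ≠ 0 ∧
        φ ((Pi.single 0 1 : Fin 3 → ℂ)) = x • (Pi.single 0 1 : Fin 3 → ℂ) + y • (Pi.single 1 1 : Fin 3 → ℂ) + z • (Pi.single 2 1 : Fin 3 → ℂ) ∧
        φ ((Pi.single 1 1 : Fin 3 → ℂ)) = x ^ 2 • (Pi.single 1 1 : Fin 3 → ℂ) + (x * y) • (Pi.single 2 1 : Fin 3 → ℂ) ∧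
        φ ((Pi.single 2 1 : Fin 3 → ℂ)) = x ^ 3 • (Pi.single 2 1 : Fin 3 → ℂ))) ∧
    (∀ x y z : ℂ, x ≠ 0 →
      ∃ φ : (Fin 3 → ℂ) ≃ₗ[ℂ] (Fin 3 → ℂ),
        (∀ u v : Fin 3 → ℂ, φ (mB301 u v) = mB301 (φ u) (φ v)) ∧
        φ ((Pi.single 0 1 : Fin 3 → ℂ)) = x • (Pi.single 0 1 : Fin 3 → ℂ) + y • (Pi.single 1 1 : Fin 3 → ℂ) + z • (Pi.single 2 1 : Fin 3 → ℂ) ∧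
        φ ((Pi.single 1 1 : Fin 3 → ℂ)) = x ^ 2 • (Pi.single 1 1 : Fin 3 → ℂ) + (x * y) • (Pi.single 2 1 : Fin 3 → ℂ) ∧
        φ ((Pi.single 2 1 : Fin 3 → ℂ)) = x ^ 3 • (Pi.single 2 1 : Fin 3 → ℂ)) := by
  refine ⟨fun φ => ⟨fun hφ => ?_, fun ⟨x, y, z, _, hcols⟩ => ?_⟩, fun x y z hx => ?_⟩
  · have htri := eq_triangularMap_of_map_mB301 φ.toLinearMap hφ
    have hinj : Function.Injective φ.toLinearMap := φ.injective
    rw [htri] at hinj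
    exact ⟨_, _, _, injective_triangularMap_iff.1 hinj, (eq_triangularMap_iff _ _ _ _).1 htri⟩
  · have htri := (eq_triangularMap_iff φ.toLinearMap x y z).2 hcols
    intro u v
    have hmul := triangularMap_map_mB301 x y z u v
    rw [← htri] at hmul
    exact hmul
  · exact ⟨LinearEquiv.ofInjectiveEndo _ (injective_triangularMap_iff.2 hx),
      triangularMap_map_mB301 x y z, (eq_triangularMap_iff _ x y z).1 rfl⟩
end

section
/- Up to isomorphism, there is exactly one nonzero 2-dimensional nilpotent bicommutative algebra over ℂ, namely the algebra with basis e₁,e₂ and single nonzero product e₁e₁ = e₂. -/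
/-!
If every square `w * w` vanished, `μ` would be alternating, so any `a, b` with `a * b ≠ 0` would
be a basis of `A`; writing `a * b = α • a + β • b` and multiplying on the right by `b` and by `a`,
left nilpotency forces `α = β = 0`. Hence some `w` has `w * w ≠ 0`, left nilpotency makes
`(w, w * w)` a basis, and in it the only nonzero product of basis vectors is `w * w`.
-/

noncomputable def m2model : (Fin 2 → ℂ) →ₗ[ℂ] (Fin 2 → ℂ) →ₗ[ℂ] (Fin 2 → ℂ) :=
  LinearMap.mk₂ ℂ (fun u v => ![0, u 0 * v 0])
    (fun x y v => by funext i; fin_cases i <;> simp <;> ring)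
    (fun a x v => by funext i; fin_cases i <;> simp <;> ring)
    (fun u x y => by funext i; fin_cases i <;> simp <;> ring)
    (fun u a x => by funext i; fin_cases i <;> simp <;> ring)

lemma m2model_apply (u v : Fin 2 → ℂ) : m2model u v = ![0, u 0 * v 0] := rfl

lemma m2model_m2model_left (x y z : Fin 2 → ℂ) : m2model (m2model x y) z = 0 := by
  simp [m2model_apply]

lemma m2model_m2model_right (x y z : Fin 2 → ℂ) : m2model x (m2model y z) = 0 := by
  simp [m2model_apply]

lemma m2model_ne_zero : m2model ≠ 0 := fun h => by
  simpa [m2model_apply] using congr_fun (LinearMap.congr_fun₂ h (Pi.single 0 1) (Pi.single 0 1)) 1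

section

variable {K A : Type*} [Field K] [AddCommGroup A] [Module K A] {μ : A →ₗ[K] A →ₗ[K] A}

lemma linearIndependent_pair_of_apply_ne_zero {a b : A} (ha : μ a a = 0) (hb : μ b b = 0)
    (hab : μ a b ≠ 0) : LinearIndependent K ![a, b] := by
  rw [LinearIndependent.pair_iff]
  intro s t hst
  have hs : s • μ a b = 0 := by simpa [hb] using congr(μ $hst b)
  have ht : t • μ a b = 0 := by simpa [ha] using congr(μ a $hst)
  exact ⟨(smul_eq_zero.1 hs).resolve_right hab, (smul_eq_zero.1 ht).resolve_right hab⟩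

lemma linearIndependent_self_apply_self (hL : ∀ x y z, μ (μ x y) z = 0) {w : A}
    (hw : μ w w ≠ 0) : LinearIndependent K ![w, μ w w] := by
  rw [LinearIndependent.pair_iff]
  intro s t hst
  have hs : s • μ w w = 0 := by simpa [hL] using congr(μ $hst w)
  have hs0 := (smul_eq_zero.1 hs).resolve_right hw
  subst hs0
  exact ⟨rfl, (smul_eq_zero.1 (by simpa using hst)).resolve_right hw⟩

lemma exists_apply_self_ne_zero (hA : Module.finrank K A = 2) (hL : ∀ x y z, μ (μ x y) z = 0)
    (hμ : μ ≠ 0) : ∃ w, μ w w ≠ 0 := by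
  by_contra! hsq
  obtain ⟨a, b, hab⟩ : ∃ a b, μ a b ≠ 0 := by
    by_contra! h
    exact hμ (LinearMap.ext₂ h)
  have hanti : μ b a = -μ a b := by
    have := hsq (a + b)
    simp only [map_add, LinearMap.add_apply, hsq, zero_add, add_zero] at this
    exact eq_neg_of_add_eq_zero_left this
  have hspan := (linearIndependent_pair_of_apply_ne_zero (hsq a) (hsq b) hab
    ).span_eq_top_of_card_eq_finrank (by simp [hA])
  obtain ⟨c, hc⟩ := (Submodule.mem_span_range_iff_exists_fun K).1
    (hspan ▸ Submodule.mem_top : μ a b ∈ _)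
  simp only [Fin.sum_univ_two, Matrix.cons_val_zero, Matrix.cons_val_one] at hc
  have hc0 : c 0 = 0 := by simpa [hsq, hL, hab] using congr(μ $hc b)
  have hc1 : c 1 = 0 := by simpa [hsq, hL, hanti, hab] using congr(μ $hc a)
  exact hab (by simpa [hc0, hc1] using hc.symm)

end

lemma Module.Basis.equivFun_apply_eq_m2model {A : Type*} [AddCommGroup A] [Module ℂ A]
    {μ : A →ₗ[ℂ] A →ₗ[ℂ] A} (b : Basis (Fin 2) ℂ A) (h00 : μ (b 0) (b 0) = b 1)
    (h01 : μ (b 0) (b 1) = 0) (h1 : ∀ x, μ (b 1) x = 0) (u v : A) :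
    b.equivFun (μ u v) = m2model (b.equivFun u) (b.equivFun v) := by
  have hcomp : μ.compr₂ b.equivFun.toLinearMap =
      m2model.compl₁₂ b.equivFun.toLinearMap b.equivFun.toLinearMap := by
    refine LinearMap.ext_basis b b fun i j => ?_
    ext k
    fin_cases i <;> fin_cases j <;> fin_cases k <;> simp [h00, h01, h1, m2model_apply]
  exact LinearMap.congr_fun₂ hcomp u v

lemma exists_linearEquiv_m2model {A : Type*} [AddCommGroup A] [Module ℂ A]
    (hA : Module.finrank ℂ A = 2) {μ : A →ₗ[ℂ] A →ₗ[ℂ] A} (hL : ∀ x y z, μ (μ x y) z = 0)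
    (hR : ∀ x y z, μ x (μ y z) = 0) (hμ : μ ≠ 0) :
    ∃ φ : A ≃ₗ[ℂ] (Fin 2 → ℂ), ∀ u v, φ (μ u v) = m2model (φ u) (φ v) := by
  obtain ⟨w, hw⟩ := exists_apply_self_ne_zero hA hL hμ
  let b := basisOfLinearIndependentOfCardEqFinrank (linearIndependent_self_apply_self hL hw)
    (by simp [hA])
  exact ⟨b.equivFun,
    b.equivFun_apply_eq_m2model (by simp [b]) (by simp [b, hR]) (by simp [b, hL])⟩

/-- Up to isomorphism, there is exactly one nonzero 2-dimensional nilpotent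
bicommutative algebra over `ℂ`: the one with `e₁e₁ = e₂`. -/
theorem unique_two_dim_nilpotent_bicommutative :
    -- the model is a nonzero nilpotent bicommutative algebra
    ((∀ x y z : Fin 2 → ℂ, m2model (m2model x y) z = m2model (m2model x z) y) ∧
     (∀ x y z : Fin 2 → ℂ, m2model x (m2model y z) = m2model y (m2model x z)) ∧
     (∀ x y z : Fin 2 → ℂ, m2model (m2model x y) z = 0 ∧ m2model x (m2model y z) = 0) ∧
     m2model ≠ 0) ∧
    -- and any such algebra is isomorphic to it
    (∀ (A : Type) (_ : AddCommGroup A) (_ : Module ℂ A), Module.finrank ℂ A = 2 →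
      ∀ μ : A →ₗ[ℂ] A →ₗ[ℂ] A,
        (∀ x y z : A, μ (μ x y) z = μ (μ x z) y) →
        (∀ x y z : A, μ x (μ y z) = μ y (μ x z)) →
        (∀ x y z : A, μ (μ x y) z = 0 ∧ μ x (μ y z) = 0) →
        μ ≠ 0 →
        ∃ φ : A ≃ₗ[ℂ] (Fin 2 → ℂ),
          ∀ u v : A, φ (μ u v) = m2model (φ u) (φ v)) :=
  ⟨⟨fun x y z => by rw [m2model_m2model_left, m2model_m2model_left],
    fun x y z => by rw [m2model_m2model_right, m2model_m2model_right],
    fun x y z => ⟨m2model_m2model_left x y z, m2model_m2model_right x y z⟩, m2model_ne_zero⟩,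
   fun _ _ _ hA _ _ _ hnil hμ => exists_linearEquiv_m2model hA (fun x y z => (hnil x y z).1)
    (fun x y z => (hnil x y z).2) hμ⟩
end

section
/- B⁴₁₀ degenerates to B⁴₁₃: for each t ∈ ℂ*, the basis E₁ᵗ = te₁, E₂ᵗ = e₂, E₃ᵗ = te₃, E₄ᵗ = te₄ of B⁴₁₀ yields structure constants that are polynomial in t and at t = 0 give the multiplication of B⁴₁₃. Concretely, in B⁴₁₀ one has E₁ᵗE₂ᵗ = E₃ᵗ, E₂ᵗE₁ᵗ = E₄ᵗ, E₃ᵗE₂ᵗ = E₄ᵗ, E₁ᵗE₃ᵗ = tE₄ᵗ, and all other products of the Eᵢᵗ vanish. -/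
theorem LinearMap.map_smul_smul₂ {R M N P : Type*} [CommSemiring R] [AddCommMonoid M]
    [AddCommMonoid N] [AddCommMonoid P] [Module R M] [Module R N] [Module R P]
    (B : M →ₗ[R] N →ₗ[R] P) (a b : R) (x : M) (y : N) :
    B (a • x) (b • y) = (a * b) • B x y := by
  rw [map_smul₂, map_smul, smul_smul]

namespace mB410

theorem single_zero_single_one : mB410 (Pi.single 0 1) (Pi.single 1 1) = Pi.single 2 1 := by
  ext k; fin_cases k <;> simp [mB410]

theorem single_one_single_zero : mB410 (Pi.single 1 1) (Pi.single 0 1) = Pi.single 3 1 := by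
  ext k; fin_cases k <;> simp [mB410]

theorem single_two_single_one : mB410 (Pi.single 2 1) (Pi.single 1 1) = Pi.single 3 1 := by
  ext k; fin_cases k <;> simp [mB410]

theorem single_zero_single_two : mB410 (Pi.single 0 1) (Pi.single 2 1) = Pi.single 3 1 := by
  ext k; fin_cases k <;> simp [mB410]

theorem single_single_eq_zero {i j : Fin 4}
    (hij : (i, j) ∉ ({(0,1), (1,0), (2,1), (0,2)} : Set (Fin 4 × Fin 4))) :
    mB410 (Pi.single i 1) (Pi.single j 1) = 0 := by
  fin_cases i <;> fin_cases j <;> simp at hij <;> ext k <;> fin_cases k <;> simp [mB410]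

end mB410

theorem B410_degenerates_to_B413_general (t : ℂ) :
    let e : Fin 4 → (Fin 4 → ℂ) := fun i => Pi.single i 1
    let E : Fin 4 → (Fin 4 → ℂ) := ![t • e 0, e 1, t • e 2, t • e 3]
    mB410 (E 0) (E 1) = E 2 ∧
    mB410 (E 1) (E 0) = E 3 ∧
    mB410 (E 2) (E 1) = E 3 ∧
    mB410 (E 0) (E 2) = t • E 3 ∧
    ∀ i j : Fin 4, (i, j) ∉ ({(0,1), (1,0), (2,1), (0,2)} : Set (Fin 4 × Fin 4)) →
      mB410 (E i) (E j) = 0 := by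
  intro e E
  have hE : ∀ i, E i = ![t, 1, t, t] i • e i := by
    intro i; fin_cases i <;> simp [E]
  simp only [hE, LinearMap.map_smul_smul₂, smul_smul]
  refine ⟨?_, ?_, ?_, ?_, fun i j hij => ?_⟩
  · simp [e, mB410.single_zero_single_one]
  · simp [e, mB410.single_one_single_zero]
  · simp [e, mB410.single_two_single_one]
  · simp [e, mB410.single_zero_single_two]
  · simp [e, mB410.single_single_eq_zero hij]

/-- `B⁴₁₀` degenerates to `B⁴₁₃`: in the parametrized basis `E₁ᵗ = te₁`, `E₂ᵗ = e₂`,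
`E₃ᵗ = te₃`, `E₄ᵗ = te₄` the multiplication of `B⁴₁₀` has polynomial structure
constants whose value at `t = 0` is the multiplication of `B⁴₁₃`. -/
theorem B410_degenerates_to_B413 (t : ℂ) (ht : t ≠ 0) :
    let e : Fin 4 → (Fin 4 → ℂ) := fun i => Pi.single i 1
    let E : Fin 4 → (Fin 4 → ℂ) := ![t • e 0, e 1, t • e 2, t • e 3]
    mB410 (E 0) (E 1) = E 2 ∧
    mB410 (E 1) (E 0) = E 3 ∧
    mB410 (E 2) (E 1) = E 3 ∧
    mB410 (E 0) (E 2) = t • E 3 ∧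
    ∀ i j : Fin 4, (i, j) ∉ ({(0,1), (1,0), (2,1), (0,2)} : Set (Fin 4 × Fin 4)) →
      mB410 (E i) (E j) = 0 :=
  B410_degenerates_to_B413_general t
end

section
/- For the algebra B³₀₁ (nonzero products e₁e₁ = e₂, e₂e₁ = e₃) and automorphism φ with matrix [[x,0,0],[y,x²,0],[z,xy,x³]], the induced action on the cohomology classes ∇₁ = [Δ₁₂] and ∇₂ = [Δ₃₁] satisfies: φ acting on α₁∇₁ + α₂∇₂ gives x³α₁∇₁ + x⁴α₂∇₂ (modulo coboundaries). Concretely: the bilinear form (u,v) ↦ α₁Δ₁₂(φu,φv) + α₂Δ₃₁(φu,φv) differs from x³α₁Δ₁₂ + x⁴α₂Δ₃₁ by a coboundary δf for some linear map f : B³₀₁ → ℂ. -/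
theorem mB301_apply (u v : Fin 3 → ℂ) : mB301 u v = ![0, u 0 * v 0, u 1 * v 0] := rfl

theorem LinearMap.apply_eq_of_lowerTriangular {R : Type*} [CommRing R]
    (ψ : (Fin 3 → R) →ₗ[R] (Fin 3 → R)) {x y z : R}
    (h0 : ψ (Pi.single 0 1) = x • Pi.single 0 1 + y • Pi.single 1 1 + z • Pi.single 2 1)
    (h1 : ψ (Pi.single 1 1) = x ^ 2 • Pi.single 1 1 + (x * y) • Pi.single 2 1)
    (h2 : ψ (Pi.single 2 1) = x ^ 3 • Pi.single 2 1) (u : Fin 3 → R) :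
    ψ u = ![x * u 0, y * u 0 + x ^ 2 * u 1, z * u 0 + x * y * u 1 + x ^ 3 * u 2] := by
  conv_lhs => rw [pi_eq_sum_univ' u]
  rw [map_sum, Fin.sum_univ_three, map_smul, map_smul, map_smul, h0, h1, h2]
  funext i
  fin_cases i <;> simp <;> ring

theorem B301_action_on_cohomology_general (α₁ α₂ x y z : ℂ)
    (φ : (Fin 3 → ℂ) ≃ₗ[ℂ] (Fin 3 → ℂ))
    (h0 : φ ((Pi.single 0 1 : Fin 3 → ℂ)) = x • (Pi.single 0 1 : Fin 3 → ℂ) + y • (Pi.single 1 1 : Fin 3 → ℂ) + z • (Pi.single 2 1 : Fin 3 → ℂ))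
    (h1 : φ ((Pi.single 1 1 : Fin 3 → ℂ)) = x ^ 2 • (Pi.single 1 1 : Fin 3 → ℂ) + (x * y) • (Pi.single 2 1 : Fin 3 → ℂ))
    (h2 : φ ((Pi.single 2 1 : Fin 3 → ℂ)) = x ^ 3 • (Pi.single 2 1 : Fin 3 → ℂ)) :
    ∃ f : (Fin 3 → ℂ) →ₗ[ℂ] ℂ,
      ∀ u v : Fin 3 → ℂ,
        α₁ * (φ u 0 * φ v 1) + α₂ * (φ u 2 * φ v 0) =
          x ^ 3 * α₁ * (u 0 * v 1) + x ^ 4 * α₂ * (u 2 * v 0) + f (mB301 u v) := by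
  -- Besides `x³α₁ u₀v₁` and `x⁴α₂ u₂v₀`, the expansion of the left side has only terms in
  -- `u₀v₀ = (uv)₁` and `u₁v₀ = (uv)₂`; they form the coboundary of this functional.
  refine ⟨(α₁ * x * y + α₂ * x * z) • LinearMap.proj 1 + (α₂ * x ^ 2 * y) • LinearMap.proj 2,
    fun u v => ?_⟩
  have hφ := φ.toLinearMap.apply_eq_of_lowerTriangular h0 h1 h2
  rw [LinearEquiv.coe_coe] at hφ
  simp [hφ, mB301_apply]
  ring

/-- The action of an automorphism `φ` of `B³₀₁` with matrix
`[[x,0,0],[y,x²,0],[z,xy,x³]]` on the cohomology classes `∇₁ = [Δ₁₂]`, `∇₂ = [Δ₃₁]`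
sends `α₁∇₁ + α₂∇₂` to `x³α₁∇₁ + x⁴α₂∇₂`: the pulled-back form differs from
`x³α₁Δ₁₂ + x⁴α₂Δ₃₁` by a coboundary. -/
theorem B301_action_on_cohomology (α₁ α₂ x y z : ℂ) (hx : x ≠ 0)
    (φ : (Fin 3 → ℂ) ≃ₗ[ℂ] (Fin 3 → ℂ))
    (hφ : ∀ u v : Fin 3 → ℂ, φ (mB301 u v) = mB301 (φ u) (φ v))
    (h0 : φ ((Pi.single 0 1 : Fin 3 → ℂ)) = x • (Pi.single 0 1 : Fin 3 → ℂ) + y • (Pi.single 1 1 : Fin 3 → ℂ) + z • (Pi.single 2 1 : Fin 3 → ℂ))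
    (h1 : φ ((Pi.single 1 1 : Fin 3 → ℂ)) = x ^ 2 • (Pi.single 1 1 : Fin 3 → ℂ) + (x * y) • (Pi.single 2 1 : Fin 3 → ℂ))
    (h2 : φ ((Pi.single 2 1 : Fin 3 → ℂ)) = x ^ 3 • (Pi.single 2 1 : Fin 3 → ℂ)) :
    ∃ f : (Fin 3 → ℂ) →ₗ[ℂ] ℂ,
      ∀ u v : Fin 3 → ℂ,
        α₁ * (φ u 0 * φ v 1) + α₂ * (φ u 2 * φ v 0) =
          x ^ 3 * α₁ * (u 0 * v 1) + x ^ 4 * α₂ * (u 2 * v 0) + f (mB301 u v) :=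
  B301_action_on_cohomology_general α₁ α₂ x y z φ h0 h1 h2
end
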